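/- arXiv:1006.4333 — 4 statements merged into one kernel-verified Lean document; each statement's English description precedes it below -/
import Mathlib

section
/- If G is block-decomposable and every node of G has degree at most 3, then no block decomposition of G contains a square block. -/
/-- The six block shapes: spike, triangle, infork, outfork, diamond, square. -/
inductive BlockShape : Type
  | spike | triangle | infork | outfork | diamond | square
  deriving DecidableEq

namespace BlockShape

/-- Number of nodes of each block shape. -/
def numNodes : BlockShape → ℕ
  | spike => 2
  | triangle => 3
  | infork => 3
  | outfork => 3
  | diamond => 4
  | square => 5

/-- The directed edges of each block shape.
For the spike the nodes are `x = 0, y = 1` with edge `x → y`.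
For the triangle the nodes are `0, 1, 2` with edges `0 → 1 → 2 → 0`.
For the infork the nodes are `x = 0, y = 1, c = 2` with edges `x → c`, `y → c`.
For the outfork the nodes are `x = 0, y = 1, c = 2` with edges `c → x`, `c → y`.
For the diamond the nodes are `p = 0, q = 1, x = 2, y = 3` with boundary edges
`p → x, x → q, q → y, y → p` and mid-edge `q → p`.
For the square the nodes are the center `c = 0` and corners `v1 = 1, …, v4 = 4`, with
edges `v1 → v2 → v3 → v4 → v1`, `c → v1`, `v2 → c`, `c → v3`, `v4 → c`. -/
def edges : (s : BlockShape) → List (Fin s.numNodes × Fin s.numNodes)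
  | spike => ([(0, 1)] : List (Fin 2 × Fin 2))
  | triangle => ([(0, 1), (1, 2), (2, 0)] : List (Fin 3 × Fin 3))
  | infork => ([(0, 2), (1, 2)] : List (Fin 3 × Fin 3))
  | outfork => ([(2, 0), (2, 1)] : List (Fin 3 × Fin 3))
  | diamond => ([(0, 2), (2, 1), (1, 3), (3, 0), (1, 0)] : List (Fin 4 × Fin 4))
  | square => ([(1, 2), (2, 3), (3, 4), (4, 1), (0, 1), (2, 0), (0, 3), (4, 0)] :
      List (Fin 5 × Fin 5))

/-- The outlets (white nodes) of each block shape. -/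
def IsOutlet : (s : BlockShape) → Fin s.numNodes → Prop
  | spike, _ => True
  | triangle, _ => True
  | infork, i => (i : ℕ) = 2
  | outfork, i => (i : ℕ) = 2
  | diamond, i => (i : ℕ) = 0 ∨ (i : ℕ) = 1
  | square, i => (i : ℕ) = 0

/-- The degree of a node inside its block (number of incident edges). -/
def blockDeg (s : BlockShape) (i : Fin s.numNodes) : ℕ :=
  s.edges.countP fun e => decide (e.1 = i) || decide (e.2 = i)

end BlockShape

/-- A directed multigraph on a vertex type `V` is given by its edge multiplicity
function `G : V → V → ℕ`.  It is a directed graph in our sense if it has no loops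
and no 2-cycles. -/
def IsDiGraph {V : Type} (G : V → V → ℕ) : Prop :=
  (∀ v, G v v = 0) ∧ ∀ x y, G x y = 0 ∨ G y x = 0

/-- Degree of a node: the number of incident edges counted with multiplicity. -/
def degree {V : Type} [Fintype V] (G : V → V → ℕ) (v : V) : ℕ :=
  ∑ w, (G v w + G w v)

/-- Two nodes are adjacent if some edge joins them (in either direction). -/
def Adj {V : Type} (G : V → V → ℕ) (x y : V) : Prop := 0 < G x y + G y x

/-- `Reach G x y` : `y` lies in the connected component of `x`. -/
def Reach {V : Type} (G : V → V → ℕ) : V → V → Prop := Relation.ReflTransGen (Adj G)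

/-- The connected component of a node, as a finset. -/
noncomputable def component {V : Type} [Fintype V] (G : V → V → ℕ) (v : V) : Finset V :=
  letI := Classical.decPred fun w => Reach G v w
  Finset.univ.filter (Reach G v)

/-- Total number of block edges mapped onto the ordered pair `(x, y)` by the gluing data. -/
def blockMult {V : Type} [DecidableEq V] (n : ℕ) (shape : Fin n → BlockShape)
    (emb : (b : Fin n) → Fin (shape b).numNodes → V) (x y : V) : ℕ :=
  ∑ b : Fin n, (shape b).edges.countP fun e => decide (emb b e.1 = x ∧ emb b e.2 = y)

/-- A block decomposition of the directed multigraph `G` : a finite collection of blocks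
together with an identification of their nodes with the nodes of `G` such that
* each block is embedded injectively,
* nodes of two distinct blocks may be identified only if both are outlets,
* each outlet is identified with at most one other outlet (no vertex lies in three blocks),
* every vertex of `G` comes from some block, and
* the multiplicity of each edge of `G` is the number of block edges giving it minus the
  number of block edges giving the reversed edge (two parallel edges with the same
  direction are kept as a double edge; two parallel edges with opposite directions
  annihilate each other). -/
structure BlockDecomposition {V : Type} [Fintype V] [DecidableEq V] (G : V → V → ℕ) :
    Type where
  n : ℕ
  shape : Fin n → BlockShape
  emb : (b : Fin n) → Fin (shape b).numNodes → V
  emb_inj : ∀ b, Function.Injective (emb b)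
  glue_outlets : ∀ (b c : Fin n) (i : Fin (shape b).numNodes) (j : Fin (shape c).numNodes),
    emb b i = emb c j → b ≠ c → (shape b).IsOutlet i ∧ (shape c).IsOutlet j
  atMostTwo : ∀ (b c d : Fin n) (i : Fin (shape b).numNodes) (j : Fin (shape c).numNodes)
    (k : Fin (shape d).numNodes), emb b i = emb c j → emb b i = emb d k →
    b = c ∨ b = d ∨ c = d
  covers : ∀ v : V, ∃ b i, emb b i = v
  edge_eq : ∀ x y : V, G x y = blockMult n shape emb x y - blockMult n shape emb y x

/-- The number of block edges of a decomposition lying over the ordered pair `(x, y)`. -/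
def BlockDecomposition.mult {V : Type} [Fintype V] [DecidableEq V] {G : V → V → ℕ}
    (D : BlockDecomposition G) : V → V → ℕ :=
  blockMult D.n D.shape D.emb

/-- A graph is (block-)decomposable if it admits a block decomposition. -/
def Decomposable {V : Type} [Fintype V] [DecidableEq V] (G : V → V → ℕ) : Prop :=
  Nonempty (BlockDecomposition G)

/-- The edge `e` of block `b` is annihilated in the decomposition `D` : some edge of
another block lies over the same pair of vertices with the opposite direction. -/
def BlockDecomposition.EdgeAnnihilated {V : Type} [Fintype V] [DecidableEq V]
    {G : V → V → ℕ} (D : BlockDecomposition G) (b : Fin D.n)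
    (e : Fin (D.shape b).numNodes × Fin (D.shape b).numNodes) : Prop :=
  e ∈ (D.shape b).edges ∧
    ∃ (c : Fin D.n) (f : Fin (D.shape c).numNodes × Fin (D.shape c).numNodes),
      c ≠ b ∧ f ∈ (D.shape c).edges ∧ D.emb c f.1 = D.emb b e.2 ∧ D.emb c f.2 = D.emb b e.1

/-!
The center of a square block is joined to its four corners, which are dead ends. A dead end
lies in no other block, so no other block contributes an edge at it: the edges of the square
at the corners are exactly the edges of `G` there, and none of them annihilate inside the
square. Hence the center has degree at least 4 in `G`.
-/

namespace BlockShape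

def netMult (s : BlockShape) (i j : Fin s.numNodes) : ℕ :=
  s.edges.count (i, j) - s.edges.count (j, i)

/-- Some node is joined to dead ends of the block by at least `d` edges that do not annihilate
inside the block. -/
def HasDeadEndStar (s : BlockShape) (d : ℕ) : Prop :=
  ∃ (i : Fin s.numNodes) (t : Finset (Fin s.numNodes)), (∀ p ∈ t, ¬ s.IsOutlet p) ∧
    d ≤ ∑ p ∈ t, (s.netMult i p + s.netMult p i)

theorem square_hasDeadEndStar : square.HasDeadEndStar 4 :=
  ⟨(0 : Fin 5), ({1, 2, 3, 4} : Finset (Fin 5)),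
    show ∀ p ∈ ({1, 2, 3, 4} : Finset (Fin 5)), ¬ (p : ℕ) = 0 by decide, by decide⟩

end BlockShape

namespace BlockDecomposition

variable {V : Type} [Fintype V] [DecidableEq V] {G : V → V → ℕ} (D : BlockDecomposition G)

theorem emb_ne_of_not_isOutlet {b c : Fin D.n} {p : Fin (D.shape b).numNodes}
    (hp : ¬ (D.shape b).IsOutlet p) (hcb : c ≠ b) (k : Fin (D.shape c).numNodes) :
    D.emb c k ≠ D.emb b p :=
  fun h => hp (D.glue_outlets c b k p h hcb).2

theorem countP_emb_eq_count (b : Fin D.n) (i j : Fin (D.shape b).numNodes) :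
    (D.shape b).edges.countP (fun e => decide (D.emb b e.1 = D.emb b i ∧ D.emb b e.2 = D.emb b j))
      = (D.shape b).edges.count (i, j) := by
  rw [List.count]
  congr 1
  funext e
  rw [Bool.eq_iff_iff]
  simp [(D.emb_inj b).eq_iff, Prod.ext_iff]

theorem mult_emb_of_not_isOutlet {b : Fin D.n} {p : Fin (D.shape b).numNodes}
    (hp : ¬ (D.shape b).IsOutlet p) (i j : Fin (D.shape b).numNodes) (hij : i = p ∨ j = p) :
    D.mult (D.emb b i) (D.emb b j) = (D.shape b).edges.count (i, j) := by
  rw [← D.countP_emb_eq_count]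
  refine Finset.sum_eq_single b (fun c _ hcb => List.countP_eq_zero.2 fun e _ => ?_)
    fun hb => absurd (Finset.mem_univ b) hb
  have h₁ := D.emb_ne_of_not_isOutlet hp hcb e.1
  have h₂ := D.emb_ne_of_not_isOutlet hp hcb e.2
  rcases hij with rfl | rfl <;> simp_all

theorem apply_emb_of_not_isOutlet {b : Fin D.n} {p : Fin (D.shape b).numNodes}
    (hp : ¬ (D.shape b).IsOutlet p) (i j : Fin (D.shape b).numNodes) (hij : i = p ∨ j = p) :
    G (D.emb b i) (D.emb b j) = (D.shape b).netMult i j := by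
  rw [D.edge_eq]
  change D.mult _ _ - D.mult _ _ = _
  rw [D.mult_emb_of_not_isOutlet hp i j hij,
    D.mult_emb_of_not_isOutlet hp j i hij.symm, BlockShape.netMult]

theorem exists_le_degree_of_hasDeadEndStar {b : Fin D.n} {d : ℕ}
    (h : (D.shape b).HasDeadEndStar d) : ∃ v, d ≤ degree G v := by
  obtain ⟨i, t, ht, hd⟩ := h
  refine ⟨D.emb b i, hd.trans ?_⟩
  calc ∑ p ∈ t, ((D.shape b).netMult i p + (D.shape b).netMult p i)
      = ∑ w ∈ t.image (D.emb b), (G (D.emb b i) w + G w (D.emb b i)) := by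
        rw [Finset.sum_image fun _ _ _ _ h => D.emb_inj b h]
        refine Finset.sum_congr rfl fun p hp => ?_
        rw [D.apply_emb_of_not_isOutlet (ht p hp) i p (.inr rfl),
          D.apply_emb_of_not_isOutlet (ht p hp) p i (.inl rfl)]
    _ ≤ degree G (D.emb b i) := Finset.sum_le_sum_of_subset (Finset.subset_univ _)

end BlockDecomposition

theorem stmt_13_general {V : Type} [Fintype V] [DecidableEq V] (G : V → V → ℕ)
    (hdeg : ∀ v, degree G v ≤ 3)
    (D : BlockDecomposition G) (b : Fin D.n) :
    D.shape b ≠ BlockShape.square := by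
  intro hb
  obtain ⟨v, hv⟩ := D.exists_le_degree_of_hasDeadEndStar (hb ▸ BlockShape.square_hasDeadEndStar)
  have := hdeg v
  omega

/-- if every node of a block-decomposable graph has degree at most 3,
then no block decomposition of it contains a square block. -/
theorem stmt_13 {V : Type} [Fintype V] [DecidableEq V] (G : V → V → ℕ)
    (hG : IsDiGraph G) (hdeg : ∀ v, degree G v ≤ 3)
    (D : BlockDecomposition G) (b : Fin D.n) :
    D.shape b ≠ BlockShape.square :=
  stmt_13_general G hdeg D b
end

section
/- Let G be block-decomposable and let o be a node with exactly three outgoing edges and no incoming edges (or exactly three incoming edges and no outgoing edges). Then in every block decomposition of G none of the three edges incident to o belongs to a triangle, diamond, or square block; instead two of them form a fork block with outlet o and the third is a spike block. In particular at most one of the three neighbors of o has degree greater than 1 in G. -/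
namespace BlockShape

instance (s : BlockShape) (i : Fin s.numNodes) : Decidable (s.IsOutlet i) := by
  cases s <;> unfold IsOutlet <;> infer_instance

def outDeg (s : BlockShape) (i : Fin s.numNodes) : ℕ :=
  s.edges.countP fun e => e.1 = i

def inDeg (s : BlockShape) (i : Fin s.numNodes) : ℕ :=
  s.edges.countP fun e => e.2 = i

theorem outDeg_add_inDeg (s : BlockShape) (i : Fin s.numNodes) :
    s.outDeg i + s.inDeg i = s.blockDeg i := by
  cases s <;> revert i <;> decide

theorem outDeg_le_inDeg_add_two (s : BlockShape) (i : Fin s.numNodes) :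
    s.outDeg i ≤ s.inDeg i + 2 := by
  cases s <;> revert i <;> decide

theorem eq_outfork_of_outDeg_eq_inDeg_add_two (s : BlockShape) (i : Fin s.numNodes)
    (hi : s.IsOutlet i) (h : s.outDeg i = s.inDeg i + 2) : s = outfork ∧ (i : ℕ) = 2 := by
  revert hi h; cases s <;> revert i <;> decide

theorem eq_spike_of_outDeg_eq_inDeg_add_one (s : BlockShape) (i : Fin s.numNodes)
    (hi : s.IsOutlet i) (h : s.outDeg i = s.inDeg i + 1)
    (hdead : ∀ j, ¬ s.IsOutlet j → (j, i) ∈ s.edges → (i, j) ∈ s.edges) :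
    s = spike ∧ (i : ℕ) = 0 := by
  revert hi h hdead; cases s <;> revert i <;> decide

theorem not_isOutlet_of_mem_edges_outfork (s : BlockShape) (hs : s = outfork)
    (e : Fin s.numNodes × Fin s.numNodes) (he : e ∈ s.edges) :
    ¬ s.IsOutlet e.2 ∧ s.blockDeg e.2 = 1 := by
  subst hs; revert e; decide

theorem eq_of_mem_edges_spike (s : BlockShape) (hs : s = spike)
    (e f : Fin s.numNodes × Fin s.numNodes) (he : e ∈ s.edges) (hf : f ∈ s.edges) :
    e = f := by
  subst hs; revert e f; decide

def reverse : BlockShape → BlockShape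
  | infork => outfork
  | outfork => infork
  | s => s

/-- The relabelling under which the edges of `s.reverse` are the reversed edges of `s`. -/
def revNode : (s : BlockShape) → Fin s.reverse.numNodes → Fin s.numNodes
  | spike => Fin.rev
  | triangle => Fin.rev
  | infork => id
  | outfork => id
  | diamond => (![1, 0, 2, 3] : Fin 4 → Fin 4)
  | square => (![0, 2, 1, 4, 3] : Fin 5 → Fin 5)

theorem revNode_bijective (s : BlockShape) : Function.Bijective s.revNode := by
  cases s <;> decide

theorem edges_reverse_perm (s : BlockShape) :
    (s.reverse.edges.map (Prod.map s.revNode s.revNode)).Perm (s.edges.map Prod.swap) := by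
  cases s <;> decide

theorem isOutlet_reverse (s : BlockShape) (i : Fin s.reverse.numNodes) :
    s.reverse.IsOutlet i ↔ s.IsOutlet (s.revNode i) := by
  cases s <;> revert i <;> decide

theorem reverse_eq_outfork {s : BlockShape} : s.reverse = outfork ↔ s = infork := by
  cases s <;> decide

theorem reverse_eq_spike {s : BlockShape} : s.reverse = spike ↔ s = spike := by
  cases s <;> decide

theorem val_revNode_of_reverse_eq_outfork {s : BlockShape} (hs : s.reverse = outfork)
    (i : Fin s.reverse.numNodes) : (s.revNode i : ℕ) = i := by
  cases s <;> cases hs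
  rfl

theorem val_revNode_of_reverse_eq_spike {s : BlockShape} (hs : s.reverse = spike)
    (i : Fin s.reverse.numNodes) : (s.revNode i : ℕ) = 1 - i := by
  cases s <;> cases hs
  revert i; decide

theorem countP_reverse {V : Type} [DecidableEq V] (s : BlockShape) (f : Fin s.numNodes → V)
    (x y : V) :
    s.reverse.edges.countP (fun e => f (s.revNode e.1) = x ∧ f (s.revNode e.2) = y) =
      s.edges.countP (fun e => f e.1 = y ∧ f e.2 = x) := by
  simpa [List.countP_map, Function.comp_def, Bool.and_comm] using
    s.edges_reverse_perm.countP_eq (fun e => decide (f e.1 = x ∧ f e.2 = y))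

end BlockShape

theorem List.sum_countP_and_eq_countP {α V : Type} [Fintype V] [DecidableEq V] (l : List α)
    (p : α → Prop) [DecidablePred p] (f : α → V) :
    ∑ w, l.countP (fun e => p e ∧ f e = w) = l.countP p := by
  induction l with
  | nil => simp
  | cons a t ih =>
    simp only [List.countP_cons, Finset.sum_add_distrib, ih]
    by_cases hp : p a <;> simp [hp]

theorem degree_swap {V : Type} [Fintype V] (G : V → V → ℕ) (v : V) :
    degree (fun x y => G y x) v = degree G v :=
  Finset.sum_congr rfl fun _ _ => add_comm _ _

namespace BlockDecomposition

open BlockShape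

variable {V : Type} [Fintype V] [DecidableEq V] {G : V → V → ℕ} (D : BlockDecomposition G)

def reverse : BlockDecomposition (fun x y => G y x) where
  n := D.n
  shape b := (D.shape b).reverse
  emb b := D.emb b ∘ (D.shape b).revNode
  emb_inj b := (D.emb_inj b).comp (D.shape b).revNode_bijective.1
  glue_outlets b c i j h hbc := by
    simpa only [isOutlet_reverse] using D.glue_outlets b c _ _ h hbc
  atMostTwo b c d _ _ _ := D.atMostTwo b c d _ _ _
  covers v := by
    obtain ⟨b, i, rfl⟩ := D.covers v
    obtain ⟨i', rfl⟩ := (D.shape b).revNode_bijective.2 i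
    exact ⟨b, i', rfl⟩
  edge_eq x y := by
    simp only [blockMult, Function.comp_apply, countP_reverse]
    exact D.edge_eq y x

def outAt (b : Fin D.n) (v : V) : ℕ :=
  (D.shape b).edges.countP fun e => D.emb b e.1 = v

def inAt (b : Fin D.n) (v : V) : ℕ :=
  (D.shape b).edges.countP fun e => D.emb b e.2 = v

theorem outAt_eq_outDeg {b : Fin D.n} {i : Fin (D.shape b).numNodes} {v : V}
    (h : D.emb b i = v) : D.outAt b v = (D.shape b).outDeg i := by
  subst h
  exact List.countP_congr fun e _ => by simp [(D.emb_inj b).eq_iff]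

theorem inAt_eq_inDeg {b : Fin D.n} {i : Fin (D.shape b).numNodes} {v : V}
    (h : D.emb b i = v) : D.inAt b v = (D.shape b).inDeg i := by
  subst h
  exact List.countP_congr fun e _ => by simp [(D.emb_inj b).eq_iff]

theorem outAt_eq_zero {b : Fin D.n} {v : V} (h : ∀ i, D.emb b i ≠ v) : D.outAt b v = 0 :=
  List.countP_eq_zero.mpr fun e _ => by simpa using h e.1

theorem inAt_eq_zero {b : Fin D.n} {v : V} (h : ∀ i, D.emb b i ≠ v) : D.inAt b v = 0 :=
  List.countP_eq_zero.mpr fun e _ => by simpa using h e.2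

theorem sum_mult_left (v : V) : ∑ w, D.mult v w = ∑ b, D.outAt b v := by
  simp only [mult, blockMult, outAt]
  rw [Finset.sum_comm]
  exact Finset.sum_congr rfl fun b _ => by
    simpa using List.sum_countP_and_eq_countP _ (fun e => D.emb b e.1 = v) (D.emb b ∘ Prod.snd)

theorem sum_mult_right (v : V) : ∑ w, D.mult w v = ∑ b, D.inAt b v := by
  simp only [mult, blockMult, inAt]
  rw [Finset.sum_comm]
  exact Finset.sum_congr rfl fun b _ => by
    simpa [and_comm] using
      List.sum_countP_and_eq_countP _ (fun e => D.emb b e.2 = v) (D.emb b ∘ Prod.fst)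

theorem mult_pos_iff {x y : V} :
    0 < D.mult x y ↔ ∃ b, ∃ e ∈ (D.shape b).edges, D.emb b e.1 = x ∧ D.emb b e.2 = y := by
  simp [mult, blockMult, Finset.sum_pos_iff, List.countP_pos_iff]

theorem mult_pos_of_ne_zero {x y : V} (h : G x y ≠ 0) : 0 < D.mult x y := by
  have : G x y = D.mult x y - D.mult y x := D.edge_eq x y
  omega

theorem eq_of_emb_eq_of_not_isOutlet {b c : Fin D.n} {j : Fin (D.shape b).numNodes}
    {k : Fin (D.shape c).numNodes} (hj : ¬ (D.shape b).IsOutlet j)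
    (h : D.emb c k = D.emb b j) : c = b :=
  by_contra fun hcb => hj (D.glue_outlets c b k j h hcb).2

theorem eq_or_eq_of_emb_eq {b c d : Fin D.n} {i : Fin (D.shape b).numNodes}
    {j : Fin (D.shape c).numNodes} {k : Fin (D.shape d).numNodes} {v : V}
    (hb : D.emb b i = v) (hc : D.emb c j = v) (hbc : b ≠ c) (hd : D.emb d k = v) :
    d = b ∨ d = c := by
  rcases D.atMostTwo d b c k i j (hd.trans hb.symm) (hd.trans hc.symm) with h | h | h
  exacts [Or.inl h, Or.inr h, absurd h hbc]

theorem sum_eq_of_forall_emb_eq {v : V} {f : Fin D.n → ℕ}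
    (hf : ∀ d, (∀ k, D.emb d k ≠ v) → f d = 0) {b : Fin D.n}
    (h : ∀ c k, D.emb c k = v → c = b) : ∑ d, f d = f b :=
  Finset.sum_eq_single b (fun d _ hd => hf d fun k hk => hd (h d k hk)) (by simp)

theorem sum_eq_add_of_emb_eq {v : V} {f : Fin D.n → ℕ}
    (hf : ∀ d, (∀ k, D.emb d k ≠ v) → f d = 0) {b c : Fin D.n}
    {i : Fin (D.shape b).numNodes} {j : Fin (D.shape c).numNodes}
    (hb : D.emb b i = v) (hc : D.emb c j = v) (hbc : b ≠ c) :
    ∑ d, f d = f b + f c :=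
  Finset.sum_eq_add b c hbc
    (fun d _ hd => hf d fun k hk => (D.eq_or_eq_of_emb_eq hb hc hbc hk).elim hd.1 hd.2)
    (by simp) (by simp)

theorem degree_le_blockDeg_of_not_isOutlet {b : Fin D.n} {j : Fin (D.shape b).numNodes}
    (hj : ¬ (D.shape b).IsOutlet j) : degree G (D.emb b j) ≤ (D.shape b).blockDeg j := by
  set v := D.emb b j
  have honly : ∀ c k, D.emb c k = v → c = b := fun c k hk =>
    D.eq_of_emb_eq_of_not_isOutlet hj hk
  calc degree G v ≤ ∑ w, (D.mult v w + D.mult w v) := Finset.sum_le_sum fun w _ => by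
        have : G v w = D.mult v w - D.mult w v := D.edge_eq v w
        have : G w v = D.mult w v - D.mult v w := D.edge_eq w v
        omega
    _ = D.outAt b v + D.inAt b v := by
        rw [Finset.sum_add_distrib, sum_mult_left, sum_mult_right,
          D.sum_eq_of_forall_emb_eq (fun _ => D.outAt_eq_zero) honly,
          D.sum_eq_of_forall_emb_eq (fun _ => D.inAt_eq_zero) honly]
    _ = (D.shape b).blockDeg j := by
        rw [D.outAt_eq_outDeg rfl, D.inAt_eq_inDeg rfl, outDeg_add_inDeg]

/-- A dead end is glued to nothing, so an edge leaving it is cancelled in `G` only by the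
reverse edge inside the same block. -/
theorem ne_zero_of_not_isOutlet_of_mem_edges {b : Fin D.n} {i j : Fin (D.shape b).numNodes}
    (hj : ¬ (D.shape b).IsOutlet j) (hji : (j, i) ∈ (D.shape b).edges)
    (hij : (i, j) ∉ (D.shape b).edges) : G (D.emb b j) (D.emb b i) ≠ 0 := by
  have hpos : 0 < D.mult (D.emb b j) (D.emb b i) := D.mult_pos_iff.2 ⟨b, _, hji, rfl, rfl⟩
  have hzero : D.mult (D.emb b i) (D.emb b j) = 0 := by
    by_contra h
    obtain ⟨c, e, he, he1, he2⟩ := D.mult_pos_iff.1 (Nat.pos_of_ne_zero h)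
    obtain rfl := D.eq_of_emb_eq_of_not_isOutlet hj he2
    obtain rfl : e = (i, j) := Prod.ext (D.emb_inj c he1) (D.emb_inj c he2)
    exact hij he
  have : G (D.emb b j) (D.emb b i) = D.mult _ _ - D.mult _ _ := D.edge_eq _ _
  omega

theorem sum_outAt_eq_of_sum_eq_zero {v : V} (h0 : ∑ w, G w v = 0) :
    ∑ b, D.outAt b v = ∑ w, G v w + ∑ b, D.inAt b v := by
  rw [← sum_mult_left, ← sum_mult_right, ← Finset.sum_add_distrib]
  refine Finset.sum_congr rfl fun w _ => ?_
  have : G v w = D.mult v w - D.mult w v := D.edge_eq v w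
  have : G w v = D.mult w v - D.mult v w := D.edge_eq w v
  have := Finset.sum_eq_zero_iff.1 h0 w (Finset.mem_univ w)
  omega

theorem exists_blocks_of_sum_eq_three {o : V} (h3 : ∑ w, G o w = 3) (h0 : ∑ w, G w o = 0) :
    ∃ (b c : Fin D.n) (i : Fin (D.shape b).numNodes) (j : Fin (D.shape c).numNodes),
      D.emb b i = o ∧ D.emb c j = o ∧ b ≠ c ∧
      (D.shape b).outDeg i = (D.shape b).inDeg i + 2 ∧
      (D.shape c).outDeg j = (D.shape c).inDeg j + 1 := by
  have hbal := D.sum_outAt_eq_of_sum_eq_zero h0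
  rw [h3] at hbal
  obtain ⟨b, i, hb⟩ := D.covers o
  have hb_le := outDeg_le_inDeg_add_two (D.shape b) i
  obtain ⟨c, j, hc, hcb⟩ : ∃ c j, D.emb c j = o ∧ c ≠ b := by
    by_contra! hone
    rw [D.sum_eq_of_forall_emb_eq (fun _ => D.outAt_eq_zero) hone,
      D.sum_eq_of_forall_emb_eq (fun _ => D.inAt_eq_zero) hone,
      D.outAt_eq_outDeg hb, D.inAt_eq_inDeg hb] at hbal
    omega
  have hc_le := outDeg_le_inDeg_add_two (D.shape c) j
  rw [D.sum_eq_add_of_emb_eq (fun _ => D.outAt_eq_zero) hb hc hcb.symm,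
    D.sum_eq_add_of_emb_eq (fun _ => D.inAt_eq_zero) hb hc hcb.symm,
    D.outAt_eq_outDeg hb, D.inAt_eq_inDeg hb, D.outAt_eq_outDeg hc, D.inAt_eq_inDeg hc] at hbal
  by_cases h2 : (D.shape b).outDeg i = (D.shape b).inDeg i + 2
  · exact ⟨b, c, i, j, hb, hc, hcb.symm, h2, by omega⟩
  · exact ⟨c, b, j, i, hc, hb, hcb, by omega, by omega⟩

theorem outfork_spike_of_sum_eq_three {o : V} (h3 : ∑ w, G o w = 3) (h0 : ∑ w, G w o = 0) :
    ∃ b b' : Fin D.n, b ≠ b' ∧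
      D.shape b = BlockShape.outfork ∧ D.shape b' = BlockShape.spike ∧
      (∃ i, D.emb b i = o ∧ (i : ℕ) = 2) ∧ (∃ j, D.emb b' j = o ∧ (j : ℕ) = 0) ∧
      (∀ (c : Fin D.n) (k : Fin (D.shape c).numNodes), D.emb c k = o →
        c = b ∨ c = b') := by
  obtain ⟨b, b', i, i', hi, hi', hbb', h2, h1⟩ := D.exists_blocks_of_sum_eq_three h3 h0
  obtain ⟨hout, hout'⟩ := D.glue_outlets b b' i i' (hi.trans hi'.symm) hbb'
  obtain ⟨hb, hival⟩ := eq_outfork_of_outDeg_eq_inDeg_add_two _ _ hout h2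
  obtain ⟨hb', hi'val⟩ := eq_spike_of_outDeg_eq_inDeg_add_one _ _ hout' h1 fun j hj hji =>
    by_contra fun hij => D.ne_zero_of_not_isOutlet_of_mem_edges hj hji hij
      (hi' ▸ Finset.sum_eq_zero_iff.1 h0 _ (Finset.mem_univ _))
  exact ⟨b, b', hbb', hb, hb', ⟨i, hi, hival⟩, ⟨i', hi', hi'val⟩,
    fun c k hk => D.eq_or_eq_of_emb_eq hi hi' hbb' hk⟩

theorem infork_spike_of_sum_eq_three {o : V} (h3 : ∑ w, G w o = 3) (h0 : ∑ w, G o w = 0) :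
    ∃ b b' : Fin D.n, b ≠ b' ∧
      D.shape b = BlockShape.infork ∧ D.shape b' = BlockShape.spike ∧
      (∃ i, D.emb b i = o ∧ (i : ℕ) = 2) ∧ (∃ j, D.emb b' j = o ∧ (j : ℕ) = 1) ∧
      (∀ (c : Fin D.n) (k : Fin (D.shape c).numNodes), D.emb c k = o →
        c = b ∨ c = b') := by
  obtain ⟨b, b', hbb', hb, hb', ⟨i, hi, hival⟩, ⟨j, hj, hjval⟩, hmem⟩ :=
    D.reverse.outfork_spike_of_sum_eq_three h3 h0
  refine ⟨b, b', hbb', reverse_eq_outfork.1 hb, reverse_eq_spike.1 hb',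
    ⟨_, hi, (val_revNode_of_reverse_eq_outfork hb i).trans hival⟩,
    ⟨_, hj, (val_revNode_of_reverse_eq_spike hb' j).trans (by rw [hjval])⟩, fun c k hk => ?_⟩
  obtain ⟨k, rfl⟩ := (D.shape c).revNode_bijective.2 k
  exact hmem c k hk

end BlockDecomposition

namespace Decomposable

open BlockShape

variable {V : Type} [Fintype V] [DecidableEq V] {G : V → V → ℕ}

theorem swap (hdec : Decomposable G) : Decomposable (fun x y => G y x) :=
  hdec.map BlockDecomposition.reverse

theorem eq_of_one_lt_degree_of_sum_eq_three (hdec : Decomposable G) {o : V}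
    (h3 : ∑ w, G o w = 3) (h0 : ∑ w, G w o = 0) {w w' : V}
    (hw : G o w ≠ 0) (hw' : G o w' ≠ 0)
    (hdw : 1 < degree G w) (hdw' : 1 < degree G w') : w = w' := by
  obtain ⟨D⟩ := hdec
  obtain ⟨b, b', -, hb, hb', -, -, hmem⟩ := D.outfork_spike_of_sum_eq_three h3 h0
  have spike_head : ∀ z, G o z ≠ 0 → 1 < degree G z →
      ∃ e ∈ (D.shape b').edges, D.emb b' e.2 = z := by
    intro z hz hdz
    obtain ⟨c, e, he, he1, rfl⟩ := D.mult_pos_iff.1 (D.mult_pos_of_ne_zero hz)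
    rcases hmem c e.1 he1 with rfl | rfl
    · obtain ⟨hdead, hdeg⟩ := not_isOutlet_of_mem_edges_outfork _ hb e he
      have := D.degree_le_blockDeg_of_not_isOutlet hdead
      omega
    · exact ⟨e, he, rfl⟩
  obtain ⟨e, he, rfl⟩ := spike_head w hw hdw
  obtain ⟨e', he', rfl⟩ := spike_head w' hw' hdw'
  rw [eq_of_mem_edges_spike _ hb' e e' he he']

end Decomposable

theorem stmt_14_general {V : Type} [Fintype V] [DecidableEq V] (G : V → V → ℕ)
    (hdec : Decomposable G) (o : V) :
    ((∑ w, G o w) = 3 ∧ (∑ w, G w o) = 0 →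
      (∀ D : BlockDecomposition G,
        (∀ (c : Fin D.n) (k : Fin (D.shape c).numNodes), D.emb c k = o →
          D.shape c ≠ BlockShape.triangle ∧ D.shape c ≠ BlockShape.diamond ∧
          D.shape c ≠ BlockShape.square) ∧
        (∃ b b' : Fin D.n, b ≠ b' ∧
          D.shape b = BlockShape.outfork ∧ D.shape b' = BlockShape.spike ∧
          (∃ i, D.emb b i = o ∧ (i : ℕ) = 2) ∧ (∃ j, D.emb b' j = o ∧ (j : ℕ) = 0) ∧
          (∀ (c : Fin D.n) (k : Fin (D.shape c).numNodes), D.emb c k = o →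
            c = b ∨ c = b'))) ∧
      (∀ w w' : V, G o w ≠ 0 → G o w' ≠ 0 →
        1 < degree G w → 1 < degree G w' → w = w')) ∧
    ((∑ w, G w o) = 3 ∧ (∑ w, G o w) = 0 →
      (∀ D : BlockDecomposition G,
        (∀ (c : Fin D.n) (k : Fin (D.shape c).numNodes), D.emb c k = o →
          D.shape c ≠ BlockShape.triangle ∧ D.shape c ≠ BlockShape.diamond ∧
          D.shape c ≠ BlockShape.square) ∧
        (∃ b b' : Fin D.n, b ≠ b' ∧
          D.shape b = BlockShape.infork ∧ D.shape b' = BlockShape.spike ∧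
          (∃ i, D.emb b i = o ∧ (i : ℕ) = 2) ∧ (∃ j, D.emb b' j = o ∧ (j : ℕ) = 1) ∧
          (∀ (c : Fin D.n) (k : Fin (D.shape c).numNodes), D.emb c k = o →
            c = b ∨ c = b'))) ∧
      (∀ w w' : V, G w o ≠ 0 → G w' o ≠ 0 →
        1 < degree G w → 1 < degree G w' → w = w')) := by
  refine ⟨fun ⟨h3, h0⟩ =>
      ⟨fun D => ?_, fun _ _ => hdec.eq_of_one_lt_degree_of_sum_eq_three h3 h0⟩,
    fun ⟨h3, h0⟩ => ⟨fun D => ?_, fun _ _ => ?_⟩⟩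
  · obtain ⟨b, b', hbb', hb, hb', hi, hj, hmem⟩ := D.outfork_spike_of_sum_eq_three h3 h0
    refine ⟨fun c k hk => ?_, b, b', hbb', hb, hb', hi, hj, hmem⟩
    rcases hmem c k hk with rfl | rfl <;> simp [hb, hb']
  · obtain ⟨b, b', hbb', hb, hb', hi, hj, hmem⟩ := D.infork_spike_of_sum_eq_three h3 h0
    refine ⟨fun c k hk => ?_, b, b', hbb', hb, hb', hi, hj, hmem⟩
    rcases hmem c k hk with rfl | rfl <;> simp [hb, hb']
  · simpa only [degree_swap] using hdec.swap.eq_of_one_lt_degree_of_sum_eq_three (o := o) h3 h0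

/-- if a node `o` of a block-decomposable graph has exactly three
outgoing edges and no incoming edges (resp. three incoming and no outgoing), then in
every block decomposition none of the three edges at `o` belongs to a triangle,
diamond or square block; instead two of them form a fork block with outlet `o` and
the third is a spike block.  In particular at most one of the three neighbors of `o`
has degree greater than 1. -/
theorem stmt_14 {V : Type} [Fintype V] [DecidableEq V] (G : V → V → ℕ)
    (hG : IsDiGraph G) (hdec : Decomposable G) (o : V) :
    ((∑ w, G o w) = 3 ∧ (∑ w, G w o) = 0 →
      (∀ D : BlockDecomposition G,
        (∀ (c : Fin D.n) (k : Fin (D.shape c).numNodes), D.emb c k = o →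
          D.shape c ≠ BlockShape.triangle ∧ D.shape c ≠ BlockShape.diamond ∧
          D.shape c ≠ BlockShape.square) ∧
        (∃ b b' : Fin D.n, b ≠ b' ∧
          D.shape b = BlockShape.outfork ∧ D.shape b' = BlockShape.spike ∧
          (∃ i, D.emb b i = o ∧ (i : ℕ) = 2) ∧ (∃ j, D.emb b' j = o ∧ (j : ℕ) = 0) ∧
          (∀ (c : Fin D.n) (k : Fin (D.shape c).numNodes), D.emb c k = o →
            c = b ∨ c = b'))) ∧
      (∀ w w' : V, G o w ≠ 0 → G o w' ≠ 0 →
        1 < degree G w → 1 < degree G w' → w = w')) ∧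
    ((∑ w, G w o) = 3 ∧ (∑ w, G o w) = 0 →
      (∀ D : BlockDecomposition G,
        (∀ (c : Fin D.n) (k : Fin (D.shape c).numNodes), D.emb c k = o →
          D.shape c ≠ BlockShape.triangle ∧ D.shape c ≠ BlockShape.diamond ∧
          D.shape c ≠ BlockShape.square) ∧
        (∃ b b' : Fin D.n, b ≠ b' ∧
          D.shape b = BlockShape.infork ∧ D.shape b' = BlockShape.spike ∧
          (∃ i, D.emb b i = o ∧ (i : ℕ) = 2) ∧ (∃ j, D.emb b' j = o ∧ (j : ℕ) = 1) ∧
          (∀ (c : Fin D.n) (k : Fin (D.shape c).numNodes), D.emb c k = o →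
            c = b ∨ c = b'))) ∧
      (∀ w w' : V, G w o ≠ 0 → G w' o ≠ 0 →
        1 < degree G w → 1 < degree G w' → w = w')) :=
  stmt_14_general G hdec o
end

section
/- Let G be a finite directed graph without loops or 2-cycles and let o be a node with exactly three outgoing edges and no incoming edges, joining o to three distinct neighbors. If at least two of the three neighbors of o have degree greater than 1 in G, then G is not block-decomposable. If G is block-decomposable and exactly one neighbor x of o has degree greater than 1, then in every block decomposition of G the edge from o to x is a spike block and the other two edges at o form an outfork block with outlet o. -/
namespace Stmt15Aux

instance : Fintype BlockShape :=
  ⟨⟨[BlockShape.spike, BlockShape.triangle, BlockShape.infork, BlockShape.outfork,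
      BlockShape.diamond, BlockShape.square], by decide⟩,
    fun x => by cases x <;> decide⟩

instance instDecOutlet : ∀ (s : BlockShape), DecidablePred s.IsOutlet
  | .spike => fun _ => inferInstanceAs (Decidable True)
  | .triangle => fun _ => inferInstanceAs (Decidable True)
  | .infork => fun i => inferInstanceAs (Decidable ((i : ℕ) = 2))
  | .outfork => fun i => inferInstanceAs (Decidable ((i : ℕ) = 2))
  | .diamond => fun i => inferInstanceAs (Decidable ((i : ℕ) = 0 ∨ (i : ℕ) = 1))
  | .square => fun i => inferInstanceAs (Decidable ((i : ℕ) = 0))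

/-- out-degree of node `i` inside block shape `s`. -/
def outDeg (s : BlockShape) (i : Fin s.numNodes) : ℕ :=
  s.edges.countP fun e => decide (e.1 = i)

/-- in-degree of node `i` inside block shape `s`. -/
def inDeg (s : BlockShape) (i : Fin s.numNodes) : ℕ :=
  s.edges.countP fun e => decide (e.2 = i)

/-- number of edges from `i` to `j` inside block shape `s`. -/
def eCnt (s : BlockShape) (i j : Fin s.numNodes) : ℕ :=
  s.edges.countP fun e => decide (e.1 = i ∧ e.2 = j)

lemma D_single : ∀ (s : BlockShape) (i : Fin s.numNodes),
    outDeg s i ≠ inDeg s i + 3 := by decide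

lemma D_class : ∀ (s t : BlockShape) (i : Fin s.numNodes) (j : Fin t.numNodes),
    s.IsOutlet i → t.IsOutlet j →
    outDeg s i + outDeg t j = (inDeg s i + inDeg t j) + 3 →
    ((s = .spike ∧ (i : ℕ) = 0 ∨ s = .diamond ∧ (i : ℕ) = 1) ∧ t = .outfork ∧ (j : ℕ) = 2) ∨
    ((t = .spike ∧ (j : ℕ) = 0 ∨ t = .diamond ∧ (j : ℕ) = 1) ∧ s = .outfork ∧ (i : ℕ) = 2) := by
  decide

lemma D_outfork_outlet : ∀ s : BlockShape, s = .outfork →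
    ∀ k : Fin s.numNodes, s.IsOutlet k → (k : ℕ) = 2 := by decide

lemma D_diamond_not_outlet : ∀ s : BlockShape, s = .diamond →
    ∀ k : Fin s.numNodes, (k : ℕ) = 2 → ¬ s.IsOutlet k := by decide

lemma D_spike_e : ∀ s : BlockShape, s = .spike → ∀ i j : Fin s.numNodes,
    (i : ℕ) = 0 → (j : ℕ) = 1 → eCnt s i j = 1 := by decide

lemma D_outfork_e : ∀ s : BlockShape, s = .outfork → ∀ i j : Fin s.numNodes,
    (i : ℕ) = 2 → (j : ℕ) ≠ 2 → eCnt s i j = 1 := by decide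

lemma D_diamond_e21 : ∀ s : BlockShape, s = .diamond → ∀ i j : Fin s.numNodes,
    (i : ℕ) = 2 → (j : ℕ) = 1 → eCnt s i j = 1 := by decide

lemma D_diamond_e12 : ∀ s : BlockShape, s = .diamond → ∀ i j : Fin s.numNodes,
    (i : ℕ) = 1 → (j : ℕ) = 2 → eCnt s i j = 0 := by decide

lemma D_spike_deg0 : ∀ s : BlockShape, s = .spike → ∀ i : Fin s.numNodes,
    (i : ℕ) = 0 → outDeg s i = 1 ∧ inDeg s i = 0 := by decide

lemma D_outfork_deg2 : ∀ s : BlockShape, s = .outfork → ∀ i : Fin s.numNodes,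
    (i : ℕ) = 2 → outDeg s i = 2 ∧ inDeg s i = 0 := by decide

lemma D_outfork_degcorner : ∀ s : BlockShape, s = .outfork → ∀ i : Fin s.numNodes,
    (i : ℕ) ≠ 2 → outDeg s i = 0 ∧ inDeg s i = 1 := by decide

end Stmt15Aux
namespace Stmt15Aux

section Graph

variable {V : Type} [Fintype V] [DecidableEq V] {G : V → V → ℕ}

lemma sum_countP_right {α : Type} (l : List α) (P : α → Prop) [DecidablePred P] (f : α → V) :
    ∑ y : V, l.countP (fun e => decide (P e ∧ f e = y)) = l.countP (fun e => decide (P e)) := by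
  induction l with
  | nil => simp
  | cons a t ih =>
      simp only [List.countP_cons, Finset.sum_add_distrib, ih]
      congr 1
      by_cases h : P a
      · simp [h, Finset.sum_ite_eq]
      · simp [h]

lemma sum_countP_left {α : Type} (l : List α) (P : α → Prop) [DecidablePred P] (f : α → V) :
    ∑ y : V, l.countP (fun e => decide (f e = y ∧ P e)) = l.countP (fun e => decide (P e)) := by
  induction l with
  | nil => simp
  | cons a t ih =>
      simp only [List.countP_cons, Finset.sum_add_distrib, ih]
      congr 1
      by_cases h : P a
      · simp [h, Finset.sum_ite_eq]
      · simp [h]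

variable (D : BlockDecomposition G)

/-- contribution of block `b` to the multiplicity of `(x, y)`. -/
def bcnt (b : Fin D.n) (x y : V) : ℕ :=
  (D.shape b).edges.countP fun e => decide (D.emb b e.1 = x ∧ D.emb b e.2 = y)

def boutCnt (b : Fin D.n) (x : V) : ℕ :=
  (D.shape b).edges.countP fun e => decide (D.emb b e.1 = x)

def binCnt (b : Fin D.n) (y : V) : ℕ :=
  (D.shape b).edges.countP fun e => decide (D.emb b e.2 = y)

lemma mult_eq (x y : V) : D.mult x y = ∑ b, bcnt D b x y := rfl

lemma edge_sub (x y : V) : G x y = D.mult x y - D.mult y x := D.edge_eq x y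

lemma sum_mult_out (x : V) : ∑ y, D.mult x y = ∑ b, boutCnt D b x := by
  rw [show (∑ y, D.mult x y) = ∑ y, ∑ b, bcnt D b x y from rfl, Finset.sum_comm]
  refine Finset.sum_congr rfl fun b _ => ?_
  exact sum_countP_right _ (fun e : Fin (D.shape b).numNodes × Fin (D.shape b).numNodes =>
    D.emb b e.1 = x) (fun e => D.emb b e.2)

lemma sum_mult_in (y : V) : ∑ x, D.mult x y = ∑ b, binCnt D b y := by
  rw [show (∑ x, D.mult x y) = ∑ x, ∑ b, bcnt D b x y from rfl, Finset.sum_comm]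
  refine Finset.sum_congr rfl fun b _ => ?_
  exact sum_countP_left _ (fun e : Fin (D.shape b).numNodes × Fin (D.shape b).numNodes =>
    D.emb b e.2 = y) (fun e => D.emb b e.1)

lemma bcnt_zero_left {b : Fin D.n} {x : V} (h : ∀ i, D.emb b i ≠ x) (y : V) :
    bcnt D b x y = 0 := by
  rw [bcnt, List.countP_eq_zero]
  intro e _
  simp only [decide_eq_true_eq, not_and]
  exact fun hx => absurd hx (h e.1)

lemma bcnt_zero_right {b : Fin D.n} {y : V} (h : ∀ i, D.emb b i ≠ y) (x : V) :
    bcnt D b x y = 0 := by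
  rw [bcnt, List.countP_eq_zero]
  intro e _
  simp only [decide_eq_true_eq, not_and]
  exact fun _ => h e.2

lemma boutCnt_zero {b : Fin D.n} {x : V} (h : ∀ i, D.emb b i ≠ x) :
    boutCnt D b x = 0 := by
  rw [boutCnt, List.countP_eq_zero]
  intro e _
  simpa using h e.1

lemma binCnt_zero {b : Fin D.n} {y : V} (h : ∀ i, D.emb b i ≠ y) :
    binCnt D b y = 0 := by
  rw [binCnt, List.countP_eq_zero]
  intro e _
  simpa using h e.2

lemma boutCnt_emb (b : Fin D.n) (i : Fin (D.shape b).numNodes) :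
    boutCnt D b (D.emb b i) = outDeg (D.shape b) i := by
  refine List.countP_congr fun e _ => ?_
  simp [decide_eq_decide, (D.emb_inj b).eq_iff]

lemma binCnt_emb (b : Fin D.n) (i : Fin (D.shape b).numNodes) :
    binCnt D b (D.emb b i) = inDeg (D.shape b) i := by
  refine List.countP_congr fun e _ => ?_
  simp [decide_eq_decide, (D.emb_inj b).eq_iff]

lemma bcnt_emb (b : Fin D.n) (i j : Fin (D.shape b).numNodes) :
    bcnt D b (D.emb b i) (D.emb b j) = eCnt (D.shape b) i j := by
  refine List.countP_congr fun e _ => ?_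
  simp [decide_eq_decide, (D.emb_inj b).eq_iff]

lemma boutCnt_eq (b : Fin D.n) (i : Fin (D.shape b).numNodes) {x : V}
    (hx : D.emb b i = x) : boutCnt D b x = outDeg (D.shape b) i := by
  subst hx; exact boutCnt_emb D b i

lemma binCnt_eq (b : Fin D.n) (i : Fin (D.shape b).numNodes) {x : V}
    (hx : D.emb b i = x) : binCnt D b x = inDeg (D.shape b) i := by
  subst hx; exact binCnt_emb D b i

lemma bcnt_eq (b : Fin D.n) (i j : Fin (D.shape b).numNodes) {x y : V}
    (hx : D.emb b i = x) (hy : D.emb b j = y) :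
    bcnt D b x y = eCnt (D.shape b) i j := by
  subst hx; subst hy; exact bcnt_emb D b i j

end Graph

end Stmt15Aux
namespace Stmt15Aux

section Main

variable {V : Type} [Fintype V] [DecidableEq V] {G : V → V → ℕ}

lemma sum_two {n : ℕ} (f : Fin n → ℕ) {b0 b1 : Fin n} (hne : b0 ≠ b1)
    (hz : ∀ b, b ≠ b0 → b ≠ b1 → f b = 0) : ∑ b, f b = f b0 + f b1 := by
  rw [← Finset.sum_pair hne]
  apply (Finset.sum_subset (Finset.subset_univ _) _).symm
  intro b _ hb
  simp only [Finset.mem_insert, Finset.mem_singleton] at hb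
  push_neg at hb
  exact hz b hb.1 hb.2

/-- The conclusion of the structural analysis: a spike block carrying one of the
edges at `o` and an outfork block carrying the other two. -/
def Concl (o w1 w2 w3 : V) (D : BlockDecomposition G) : Prop :=
  ∃ (bs bf : Fin D.n) (i0 i1 : Fin (D.shape bs).numNodes)
      (j0 j1 j2 : Fin (D.shape bf).numNodes),
    D.shape bs = BlockShape.spike ∧ D.shape bf = BlockShape.outfork ∧
    (i0 : ℕ) = 0 ∧ (i1 : ℕ) = 1 ∧ (j0 : ℕ) = 0 ∧ (j1 : ℕ) = 1 ∧ (j2 : ℕ) = 2 ∧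
    D.emb bs i0 = o ∧ D.emb bf j2 = o ∧
    D.emb bs i1 ≠ D.emb bf j0 ∧ D.emb bs i1 ≠ D.emb bf j1 ∧ D.emb bf j0 ≠ D.emb bf j1 ∧
    D.emb bs i1 ∈ [w1, w2, w3] ∧ D.emb bf j0 ∈ [w1, w2, w3] ∧ D.emb bf j1 ∈ [w1, w2, w3] ∧
    (∀ w ∈ [w1, w2, w3], w = D.emb bs i1 ∨ w = D.emb bf j0 ∨ w = D.emb bf j1) ∧
    degree G (D.emb bf j0) = 1 ∧ degree G (D.emb bf j1) = 1

lemma diamond_case (D : BlockDecomposition G) (o : V) (hin : ∀ w, G w o = 0)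
    (b0 b1 : Fin D.n) (i0 : Fin (D.shape b0).numNodes) (i1 : Fin (D.shape b1).numNodes)
    (hne : b0 ≠ b1) (h0 : D.emb b0 i0 = o) (h1 : D.emb b1 i1 = o)
    (hpre : ∀ b i, D.emb b i = o → b = b0 ∨ b = b1)
    (hs0 : D.shape b0 = .diamond) (hv0 : (i0 : ℕ) = 1)
    (hs1 : D.shape b1 = .outfork) (hv1 : (i1 : ℕ) = 2) : False := by
  have hn0 : (D.shape b0).numNodes = 4 := by rw [hs0]; rfl
  obtain ⟨i2, hi2⟩ : ∃ i2 : Fin (D.shape b0).numNodes, (i2 : ℕ) = 2 := ⟨⟨2, by omega⟩, rfl⟩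
  have h1le : 1 ≤ D.mult (D.emb b0 i2) o := by
    rw [mult_eq]
    calc 1 = bcnt D b0 (D.emb b0 i2) o := by
          rw [bcnt_eq D b0 i2 i0 rfl h0]
          exact (D_diamond_e21 _ hs0 i2 i0 hi2 hv0).symm
    _ ≤ ∑ b, bcnt D b (D.emb b0 i2) o :=
        Finset.single_le_sum (f := fun b => bcnt D b (D.emb b0 i2) o)
          (fun b _ => Nat.zero_le _) (Finset.mem_univ b0)
  have h0eq : D.mult o (D.emb b0 i2) = 0 := by
    rw [mult_eq]
    apply Finset.sum_eq_zero
    intro b _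
    by_cases hb0 : b = b0
    · rw [hb0, bcnt_eq D b0 i0 i2 h0 rfl]
      exact D_diamond_e12 _ hs0 i0 i2 hv0 hi2
    by_cases hb1 : b = b1
    · subst hb1
      refine bcnt_zero_right D (fun k hk => ?_) o
      have := (D.glue_outlets b b0 k i2 hk (fun h => hne h.symm)).2
      exact D_diamond_not_outlet _ hs0 i2 hi2 this
    · refine bcnt_zero_left D (fun k hk => ?_) _
      rcases hpre b k hk with h | h
      exacts [hb0 h, hb1 h]
  have hGuo := edge_sub D (D.emb b0 i2) o
  have hGou := edge_sub D o (D.emb b0 i2)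
  rw [hin (D.emb b0 i2)] at hGuo
  omega

lemma spike_case (o w1 w2 w3 : V)
    (hdist : [o, w1, w2, w3].Nodup)
    (h1 : G o w1 = 1) (h2 : G o w2 = 1) (h3 : G o w3 = 1)
    (hout : (∑ w, G o w) = 3) (hin : ∀ w, G w o = 0)
    (D : BlockDecomposition G)
    (b0 b1 : Fin D.n) (i0 : Fin (D.shape b0).numNodes) (i1 : Fin (D.shape b1).numNodes)
    (hne : b0 ≠ b1) (h0 : D.emb b0 i0 = o) (h1' : D.emb b1 i1 = o)
    (hpre : ∀ b i, D.emb b i = o → b = b0 ∨ b = b1)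
    (hs0 : D.shape b0 = .spike) (hv0 : (i0 : ℕ) = 0)
    (hs1 : D.shape b1 = .outfork) (hv1 : (i1 : ℕ) = 2) :
    Concl o w1 w2 w3 D := by
  have hb1ne : b1 ≠ b0 := fun h => hne h.symm
  have hOther : ∀ b : Fin D.n, b ≠ b0 → b ≠ b1 → ∀ i, D.emb b i ≠ o := by
    intro b hb0 hb1 i hi
    rcases hpre b i hi with h | h
    exacts [hb0 h, hb1 h]
  have hinAt : ∑ w, D.mult w o = 0 := by
    rw [sum_mult_in, sum_two _ hne (fun b hb0 hb1 => binCnt_zero D (hOther b hb0 hb1))]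
    rw [binCnt_eq D b0 i0 h0, binCnt_eq D b1 i1 h1',
      (D_spike_deg0 _ hs0 i0 hv0).2, (D_outfork_deg2 _ hs1 i1 hv1).2]
  have hmo : ∀ w, D.mult w o = 0 := by
    intro w
    exact (Finset.sum_eq_zero_iff.mp hinAt) w (Finset.mem_univ w)
  have hGeq : ∀ w, G o w = D.mult o w := by
    intro w
    have ha := edge_sub D o w
    rw [hmo w] at ha
    omega
  have hn0 : (D.shape b0).numNodes = 2 := by rw [hs0]; rfl
  have hn1 : (D.shape b1).numNodes = 3 := by rw [hs1]; rfl
  obtain ⟨ia, hia⟩ : ∃ i : Fin (D.shape b0).numNodes, (i : ℕ) = 1 := ⟨⟨1, by omega⟩, rfl⟩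
  obtain ⟨jc, hjc⟩ : ∃ j : Fin (D.shape b1).numNodes, (j : ℕ) = 0 := ⟨⟨0, by omega⟩, rfl⟩
  obtain ⟨jd, hjd⟩ : ∃ j : Fin (D.shape b1).numNodes, (j : ℕ) = 1 := ⟨⟨1, by omega⟩, rfl⟩
  have hiane : D.emb b0 ia ≠ o := by
    rw [← h0]
    intro h
    have := congrArg Fin.val (D.emb_inj b0 h)
    omega
  have hnotb1 : ∀ k, D.emb b1 k ≠ D.emb b0 ia := by
    intro k hk
    have hk2 : (k : ℕ) = 2 :=
      D_outfork_outlet _ hs1 k (D.glue_outlets b1 b0 k ia hk hb1ne).1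
    have hki : k = i1 := Fin.ext (by omega)
    rw [hki, h1'] at hk
    exact hiane hk.symm
  have hnrcorner : ∀ j : Fin (D.shape b1).numNodes, (j : ℕ) ≠ 2 →
      ∀ b, b ≠ b1 → ∀ k, D.emb b k ≠ D.emb b1 j := by
    intro j hj b hb k hk
    exact hj (D_outfork_outlet _ hs1 j (D.glue_outlets b b1 k j hk hb).2)
  -- the three neighbours of o
  have hGa : G o (D.emb b0 ia) = 1 := by
    have e1 : bcnt D b0 o (D.emb b0 ia) = 1 := by
      rw [bcnt_eq D b0 i0 ia h0 rfl]
      exact D_spike_e _ hs0 i0 ia hv0 hia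
    have e2 : bcnt D b1 o (D.emb b0 ia) = 0 := bcnt_zero_right D hnotb1 o
    rw [hGeq, mult_eq,
      sum_two _ hne (fun b hb0 hb1 => bcnt_zero_left D (hOther b hb0 hb1) _), e1, e2]
  have hGcorner : ∀ j : Fin (D.shape b1).numNodes, (j : ℕ) ≠ 2 →
      G o (D.emb b1 j) = 1 := by
    intro j hj
    have e1 : bcnt D b0 o (D.emb b1 j) = 0 :=
      bcnt_zero_right D (hnrcorner j hj b0 hne) o
    have e2 : bcnt D b1 o (D.emb b1 j) = 1 := by
      rw [bcnt_eq D b1 i1 j h1' rfl]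
      exact D_outfork_e _ hs1 i1 j hv1 hj
    rw [hGeq, mult_eq,
      sum_two _ hne (fun b hb0 hb1 => bcnt_zero_left D (hOther b hb0 hb1) _), e1, e2]
  have hGc : G o (D.emb b1 jc) = 1 := hGcorner jc (by omega)
  have hGd : G o (D.emb b1 jd) = 1 := hGcorner jd (by omega)
  -- distinctness
  have hac : D.emb b0 ia ≠ D.emb b1 jc := fun h => hnrcorner jc (by omega) b0 hne ia h
  have had : D.emb b0 ia ≠ D.emb b1 jd := fun h => hnrcorner jd (by omega) b0 hne ia h
  have hcd : D.emb b1 jc ≠ D.emb b1 jd := by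
    intro h
    have := congrArg Fin.val (D.emb_inj b1 h)
    omega
  -- membership of the neighbours
  have hsum3 : ∑ w ∈ ({D.emb b0 ia, D.emb b1 jc, D.emb b1 jd} : Finset V), G o w = 3 := by
    rw [Finset.sum_insert (by simp [hac, had]), Finset.sum_insert (by simp [hcd]),
      Finset.sum_singleton, hGa, hGc, hGd]
    rfl
  have hmem : ∀ w, G o w ≠ 0 →
      w ∈ ({D.emb b0 ia, D.emb b1 jc, D.emb b1 jd} : Finset V) := by
    intro w hw
    by_contra hwm
    have hlt := Finset.sum_lt_sum_of_subset (Finset.subset_univ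
      ({D.emb b0 ia, D.emb b1 jc, D.emb b1 jd} : Finset V)) (Finset.mem_univ w) hwm
      (Nat.pos_of_ne_zero hw) (fun j _ _ => Nat.zero_le (G o j))
    rw [hsum3, hout] at hlt
    exact lt_irrefl 3 hlt
  simp only [List.nodup_cons, List.mem_cons, List.not_mem_nil, or_false,
    List.nodup_nil, and_true, not_or] at hdist
  obtain ⟨-, ⟨h12, h13⟩, h23, -⟩ := hdist
  have hS : ({w1, w2, w3} : Finset V) ⊆ {D.emb b0 ia, D.emb b1 jc, D.emb b1 jd} := by
    intro w hw
    simp only [Finset.mem_insert, Finset.mem_singleton] at hw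
    rcases hw with rfl | rfl | rfl
    exacts [hmem _ (by simp [h1]), hmem _ (by simp [h2]), hmem _ (by simp [h3])]
  have hcardS : ({w1, w2, w3} : Finset V).card = 3 := by
    rw [Finset.card_insert_of_notMem (by simp [h12, h13]),
      Finset.card_insert_of_notMem (by simp [h23]), Finset.card_singleton]
  have hcardT : ({D.emb b0 ia, D.emb b1 jc, D.emb b1 jd} : Finset V).card ≤ 3 := by
    have t1 := Finset.card_insert_le (D.emb b0 ia) ({D.emb b1 jc, D.emb b1 jd} : Finset V)
    have t2 := Finset.card_insert_le (D.emb b1 jc) ({D.emb b1 jd} : Finset V)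
    simp only [Finset.card_singleton] at t1 t2
    omega
  have hST : ({w1, w2, w3} : Finset V) = {D.emb b0 ia, D.emb b1 jc, D.emb b1 jd} :=
    Finset.eq_of_subset_of_card_le hS (by omega)
  have hmemlist : ∀ v, v ∈ ({D.emb b0 ia, D.emb b1 jc, D.emb b1 jd} : Finset V) →
      v ∈ [w1, w2, w3] := by
    intro v hv
    rw [← hST] at hv
    simpa using hv
  have hforall : ∀ w ∈ [w1, w2, w3],
      w = D.emb b0 ia ∨ w = D.emb b1 jc ∨ w = D.emb b1 jd := by
    intro w hw
    have hw' : w ∈ ({w1, w2, w3} : Finset V) := by simpa using hw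
    rw [hST] at hw'
    simpa using hw'
  -- degrees of the outfork corners
  have hdegcorner : ∀ j : Fin (D.shape b1).numNodes, (j : ℕ) ≠ 2 →
      degree G (D.emb b1 j) = 1 := by
    intro j hj
    have hdegdef : degree G (D.emb b1 j) =
        ∑ w, (G (D.emb b1 j) w + G w (D.emb b1 j)) := rfl
    have hup : degree G (D.emb b1 j) ≤ 1 := by
      have hmono : degree G (D.emb b1 j) ≤
          ∑ w, (D.mult (D.emb b1 j) w + D.mult w (D.emb b1 j)) := by
        rw [hdegdef]
        apply Finset.sum_le_sum
        intro w _
        have e1 := edge_sub D (D.emb b1 j) w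
        have e2 := edge_sub D w (D.emb b1 j)
        omega
      have hoc : ∑ w, D.mult (D.emb b1 j) w = 0 := by
        rw [sum_mult_out]
        apply Finset.sum_eq_zero
        intro b _
        by_cases hb : b = b1
        · subst hb
          rw [boutCnt_emb]
          exact (D_outfork_degcorner _ hs1 j hj).1
        · exact boutCnt_zero D (hnrcorner j hj b hb)
      have hic : ∑ w, D.mult w (D.emb b1 j) = 1 := by
        rw [sum_mult_in, Finset.sum_eq_single b1
          (fun b _ hb => binCnt_zero D (hnrcorner j hj b hb))
          (fun h => absurd (Finset.mem_univ b1) h), binCnt_emb]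
        exact (D_outfork_degcorner _ hs1 j hj).2
      calc degree G (D.emb b1 j) ≤ _ := hmono
        _ = (∑ w, D.mult (D.emb b1 j) w) + ∑ w, D.mult w (D.emb b1 j) :=
            Finset.sum_add_distrib
        _ = 1 := by rw [hoc, hic]
    have hlow : G (D.emb b1 j) o + G o (D.emb b1 j) ≤ degree G (D.emb b1 j) := by
      rw [hdegdef]
      exact Finset.single_le_sum
        (f := fun w => G (D.emb b1 j) w + G w (D.emb b1 j))
        (fun w _ => Nat.zero_le _) (Finset.mem_univ o)
    have hGoj := hGcorner j hj
    omega
  refine ⟨b0, b1, i0, ia, jc, jd, i1, hs0, hs1, hv0, hia, hjc, hjd, hv1, h0, h1',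
    hac, had, hcd, hmemlist _ (by simp), hmemlist _ (by simp), hmemlist _ (by simp),
    hforall, hdegcorner jc (by omega), hdegcorner jd (by omega)⟩

lemma core (o w1 w2 w3 : V)
    (hdist : [o, w1, w2, w3].Nodup)
    (h1 : G o w1 = 1) (h2 : G o w2 = 1) (h3 : G o w3 = 1)
    (hout : (∑ w, G o w) = 3) (hin : ∀ w, G w o = 0)
    (D : BlockDecomposition G) : Concl o w1 w2 w3 D := by
  obtain ⟨b0, i0, h0⟩ := D.covers o
  have hGM : ∀ w, D.mult o w = G o w + D.mult w o := by
    intro w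
    have ha := edge_sub D o w
    have hb := edge_sub D w o
    rw [hin w] at hb
    omega
  have houtin : ∑ w, D.mult o w = (∑ w, D.mult w o) + 3 := by
    calc ∑ w, D.mult o w = ∑ w, (G o w + D.mult w o) :=
          Finset.sum_congr rfl (fun w _ => hGM w)
      _ = (∑ w, G o w) + ∑ w, D.mult w o := Finset.sum_add_distrib
      _ = (∑ w, D.mult w o) + 3 := by rw [hout]; exact Nat.add_comm _ _
  by_cases hone : ∀ b i, D.emb b i = o → b = b0
  · exfalso
    have hu : ∀ b, b ≠ b0 → ∀ i, D.emb b i ≠ o := fun b hb i hi => hb (hone b i hi)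
    have ho : ∑ w, D.mult o w = outDeg (D.shape b0) i0 := by
      rw [sum_mult_out, Finset.sum_eq_single b0 (fun b _ hb => boutCnt_zero D (hu b hb))
        (fun h => absurd (Finset.mem_univ b0) h), ← h0, boutCnt_emb]
    have hi' : ∑ w, D.mult w o = inDeg (D.shape b0) i0 := by
      rw [sum_mult_in, Finset.sum_eq_single b0 (fun b _ hb => binCnt_zero D (hu b hb))
        (fun h => absurd (Finset.mem_univ b0) h), ← h0, binCnt_emb]
    exact D_single (D.shape b0) i0 (by omega)
  · push_neg at hone
    obtain ⟨b1, i1, h1', hb1⟩ := hone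
    have hpre : ∀ b i, D.emb b i = o → b = b0 ∨ b = b1 := by
      intro b i hi
      rcases D.atMostTwo b b0 b1 i i0 i1 (hi.trans h0.symm) (hi.trans h1'.symm) with h | h | h
      exacts [Or.inl h, Or.inr h, absurd h.symm hb1]
    have hne : b0 ≠ b1 := fun h => hb1 h.symm
    have houtlets := D.glue_outlets b0 b1 i0 i1 (h0.trans h1'.symm) hne
    have hOther : ∀ b : Fin D.n, b ≠ b0 → b ≠ b1 → ∀ i, D.emb b i ≠ o := by
      intro b hb0 hb1' i hi
      rcases hpre b i hi with h | h
      exacts [hb0 h, hb1' h]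
    have hsum_out : ∑ w, D.mult o w = outDeg (D.shape b0) i0 + outDeg (D.shape b1) i1 := by
      rw [sum_mult_out, sum_two _ hne (fun b hb0 hb1' => boutCnt_zero D (hOther b hb0 hb1'))]
      rw [boutCnt_eq D b0 i0 h0, boutCnt_eq D b1 i1 h1']
    have hsum_in : ∑ w, D.mult w o = inDeg (D.shape b0) i0 + inDeg (D.shape b1) i1 := by
      rw [sum_mult_in, sum_two _ hne (fun b hb0 hb1' => binCnt_zero D (hOther b hb0 hb1'))]
      rw [binCnt_eq D b0 i0 h0, binCnt_eq D b1 i1 h1']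
    rcases D_class (D.shape b0) (D.shape b1) i0 i1 houtlets.1 houtlets.2 (by omega) with
      ⟨hA | hA, hs1, hv1⟩ | ⟨hB | hB, hs0', hv0'⟩
    · exact spike_case o w1 w2 w3 hdist h1 h2 h3 hout hin D b0 b1 i0 i1
        hne h0 h1' hpre hA.1 hA.2 hs1 hv1
    · exact (diamond_case D o hin b0 b1 i0 i1 hne h0 h1' hpre hA.1 hA.2 hs1 hv1).elim
    · exact spike_case o w1 w2 w3 hdist h1 h2 h3 hout hin D b1 b0 i1 i0
        hne.symm h1' h0 (fun b i hi => (hpre b i hi).symm) hB.1 hB.2 hs0' hv0'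
    · exact (diamond_case D o hin b1 b0 i1 i0 hne.symm h1' h0
        (fun b i hi => (hpre b i hi).symm) hB.1 hB.2 hs0' hv0').elim

end Main

end Stmt15Aux
/-- let `o` have exactly three outgoing edges, to three distinct
neighbors, and no incoming edges.  If at least two of the three neighbors have degree
greater than 1 then `G` is not block-decomposable.  If `G` is block-decomposable and
exactly one neighbor `x` has degree greater than 1, then in every block decomposition
the edge from `o` to `x` is a spike block and the other two edges at `o` form an
outfork block with outlet `o`. -/
theorem stmt_15 {V : Type} [Fintype V] [DecidableEq V] (G : V → V → ℕ)
    (hG : IsDiGraph G) (o w1 w2 w3 : V)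
    (hdist : [o, w1, w2, w3].Nodup)
    (h1 : G o w1 = 1) (h2 : G o w2 = 1) (h3 : G o w3 = 1)
    (hout : (∑ w, G o w) = 3) (hin : ∀ w, G w o = 0) :
    ((∃ u ∈ [w1, w2, w3], ∃ v ∈ [w1, w2, w3], u ≠ v ∧
        1 < degree G u ∧ 1 < degree G v) → ¬ Decomposable G) ∧
    (∀ x ∈ [w1, w2, w3], 1 < degree G x →
      (∀ y ∈ [w1, w2, w3], y ≠ x → degree G y = 1) →
      ∀ D : BlockDecomposition G,
        (∃ b : Fin D.n, D.shape b = BlockShape.spike ∧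
          ∃ i j : Fin (D.shape b).numNodes,
            D.emb b i = o ∧ D.emb b j = x ∧ (i : ℕ) = 0 ∧ (j : ℕ) = 1) ∧
        (∃ b' : Fin D.n, D.shape b' = BlockShape.outfork ∧
          (∃ i, D.emb b' i = o ∧ (i : ℕ) = 2) ∧
          ∀ k : Fin (D.shape b').numNodes, (k : ℕ) ≠ 2 →
            D.emb b' k ≠ x ∧ D.emb b' k ∈ [w1, w2, w3])) := by

  constructor
  · rintro ⟨u, hu, v, hv, huv, hdu, hdv⟩ ⟨D⟩
    obtain ⟨bs, bf, i0, ia, jc, jd, j2, hs0, hs1, hv0, hia, hjc, hjd, hv2, h0, h2o,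
      hac, had, hcd, hma, hmc, hmd, hforall, hdc, hdd⟩ :=
      Stmt15Aux.core o w1 w2 w3 hdist h1 h2 h3 hout hin D
    have key : ∀ z ∈ [w1, w2, w3], 1 < degree G z → z = D.emb bs ia := by
      intro z hz hdz
      rcases hforall z hz with h | h | h
      · exact h
      · rw [h, hdc] at hdz; omega
      · rw [h, hdd] at hdz; omega
    exact huv ((key u hu hdu).trans (key v hv hdv).symm)
  · intro x hx hdx _ D
    obtain ⟨bs, bf, i0, ia, jc, jd, j2, hs0, hs1, hv0, hia, hjc, hjd, hv2, h0, h2o,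
      hac, had, hcd, hma, hmc, hmd, hforall, hdc, hdd⟩ :=
      Stmt15Aux.core o w1 w2 w3 hdist h1 h2 h3 hout hin D
    have hxa : x = D.emb bs ia := by
      rcases hforall x hx with h | h | h
      · exact h
      · rw [h, hdc] at hdx; omega
      · rw [h, hdd] at hdx; omega
    refine ⟨⟨bs, hs0, i0, ia, h0, hxa.symm, hv0, hia⟩, ⟨bf, hs1, ⟨j2, h2o, hv2⟩, ?_⟩⟩
    intro k hk
    have hn1 : (D.shape bf).numNodes = 3 := by rw [hs1]; rfl
    have hk3 : (k : ℕ) < 3 := hn1 ▸ k.isLt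
    rcases (by omega : (k : ℕ) = 0 ∨ (k : ℕ) = 1) with hk0 | hk1
    · have hkjc : k = jc := Fin.ext (by omega)
      rw [hkjc, hxa]
      exact ⟨Ne.symm hac, hmc⟩
    · have hkjd : k = jd := Fin.ext (by omega)
      rw [hkjd, hxa]
      exact ⟨Ne.symm had, hmd⟩
end

section
/- A finite directed graph G without loops or 2-cycles is block-decomposable if and only if the graph obtained from G by reversing the direction of every edge is block-decomposable. -/
/-- The shape obtained by reversing all edges. -/
def BlockShape.rev : BlockShape → BlockShape
  | .spike => .spike
  | .triangle => .triangle
  | .infork => .outfork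
  | .outfork => .infork
  | .diamond => .diamond
  | .square => .square

/-- Relabelling of nodes realizing the reversal. -/
def BlockShape.revPerm : (s : BlockShape) → Fin s.numNodes ≃ Fin s.rev.numNodes
  | .spike => Equiv.swap (0 : Fin 2) (1 : Fin 2)
  | .triangle => Equiv.swap (1 : Fin 3) (2 : Fin 3)
  | .infork => Equiv.refl (Fin 3)
  | .outfork => Equiv.refl (Fin 3)
  | .diamond => Equiv.swap (0 : Fin 4) (1 : Fin 4)
  | .square => (Equiv.swap (1 : Fin 5) (2 : Fin 5)).trans (Equiv.swap (3 : Fin 5) (4 : Fin 5))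

lemma BlockShape.rev_edges_perm (s : BlockShape) :
    (s.rev).edges.Perm (s.edges.map fun e => (s.revPerm e.2, s.revPerm e.1)) := by
  cases s <;> decide

lemma BlockShape.isOutlet_revPerm (s : BlockShape) :
    ∀ i : Fin s.numNodes, s.IsOutlet i ↔ s.rev.IsOutlet (s.revPerm i) := by
  cases s <;> intro i <;> fin_cases i <;>
    simp [IsOutlet, rev, revPerm, Equiv.swap_apply_def, Fin.ext_iff] <;> decide

lemma decomposable_rev {V : Type} [Fintype V] [DecidableEq V] (G : V → V → ℕ) :
    Decomposable G → Decomposable (fun x y => G y x) := by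
  rintro ⟨D⟩
  have key : ∀ x y, blockMult D.n (fun b => (D.shape b).rev)
      (fun b i => D.emb b ((D.shape b).revPerm.symm i)) x y
      = blockMult D.n D.shape D.emb y x := by
    intro x y
    unfold blockMult
    refine Finset.sum_congr rfl fun b _ => ?_
    rw [((D.shape b).rev_edges_perm).countP_eq, List.countP_map]
    refine List.countP_congr fun e _ => ?_
    simp [Equiv.symm_apply_apply, and_comm]
  refine ⟨⟨D.n, fun b => (D.shape b).rev,
    fun b i => D.emb b ((D.shape b).revPerm.symm i),
    fun b => (D.emb_inj b).comp (Equiv.injective _),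
    ?_, ?_, ?_, ?_⟩⟩
  · intro b c i j h hbc
    obtain ⟨h1, h2⟩ := D.glue_outlets b c _ _ h hbc
    constructor
    · have := ((D.shape b).isOutlet_revPerm _).mp h1
      simpa using this
    · have := ((D.shape c).isOutlet_revPerm _).mp h2
      simpa using this
  · intro b c d i j k h1 h2
    exact D.atMostTwo b c d _ _ _ h1 h2
  · intro v
    obtain ⟨b, i, hi⟩ := D.covers v
    exact ⟨b, (D.shape b).revPerm i, by simpa using hi⟩
  · intro x y
    show G y x = _
    rw [key, key]
    exact D.edge_eq y x

/-- a finite directed graph without loops or 2-cycles is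
block-decomposable iff the graph obtained by reversing every edge is
block-decomposable. -/
theorem stmt_18 {V : Type} [Fintype V] [DecidableEq V] (G : V → V → ℕ)
    (hG : IsDiGraph G) :
    Decomposable G ↔ Decomposable (fun x y => G y x) := by
  constructor
  · exact decomposable_rev G
  · intro h
    exact decomposable_rev (fun x y => G y x) h
end
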